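/- arXiv:1009.2151 — 7 statements merged into one kernel-verified Lean document; each statement's English description precedes it below -/
import Mathlib

section
/- Let f : ℬ → 𝒜 be a surjective homomorphism of Leibniz n-algebras with kernel 𝒦, and let f₀, f₁ : R[f] → ℬ be the two projections of the kernel pair R[f] = {(b,b') ∈ ℬ×ℬ : f(b)=f(b')}. Then the restrictions of f₀ and f₁ to the commutator subalgebra [R[f],…,R[f]] agree if and only if the commutator ideal [𝒦, ℬ, …, ℬ] is zero. -/
open scoped BigOperators

/-- The fundamental identity of a Leibniz `(n+2)`-algebra. -/
def IsFund {K L : Type} [Field K] [AddCommGroup L] [Module K L] {n : ℕ}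
    (b : MultilinearMap K (fun _ : Fin (n + 2) => L) L) : Prop :=
  ∀ (l : Fin (n + 2) → L) (l' : Fin (n + 1) → L),
    b (Fin.cons (b l) l') =
      ∑ i : Fin (n + 2), b (Function.update l i (b (Fin.cons (l i) l')))

/-- Skew symmetry: the defining identity of Lie `n`-algebras. -/
def IsSkew {K L : Type} [Field K] [AddCommGroup L] [Module K L] {n : ℕ}
    (b : MultilinearMap K (fun _ : Fin (n + 2) => L) L) : Prop :=
  ∀ (l : Fin (n + 2) → L) (σ : Equiv.Perm (Fin (n + 2))),
    b l = (Equiv.Perm.sign σ : ℤ) • b (fun i => l (σ i))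

/-- `N` is an (n-sided) ideal w.r.t. the bracket `b`. -/
def IsIdeal {K L : Type} [Field K] [AddCommGroup L] [Module K L] {n : ℕ}
    (b : MultilinearMap K (fun _ : Fin (n + 2) => L) L) (N : Submodule K L) : Prop :=
  ∀ (x : Fin (n + 2) → L) (i : Fin (n + 2)), x i ∈ N → b x ∈ N

/-- The ideal generated by a set `S`. -/
def idealSpan {K L : Type} [Field K] [AddCommGroup L] [Module K L] {n : ℕ}
    (b : MultilinearMap K (fun _ : Fin (n + 2) => L) L) (S : Set L) : Submodule K L :=
  sInf {N : Submodule K L | S ⊆ N ∧ IsIdeal b N}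

/-- The ideal of the subalgebra with carrier `C` generated by `S ⊆ C`. -/
def idealSpanIn {K L : Type} [Field K] [AddCommGroup L] [Module K L] {n : ℕ}
    (b : MultilinearMap K (fun _ : Fin (n + 2) => L) L) (C S : Set L) : Submodule K L :=
  sInf {N : Submodule K L | S ⊆ N ∧
    ∀ (x : Fin (n + 2) → L) (i : Fin (n + 2)), (∀ j, x j ∈ C) → x i ∈ N → b x ∈ N}

/-- `f` is a homomorphism of Leibniz `n`-algebras from `(L, b)` to `(M, c)`. -/
def IsHom {K L M : Type} [Field K] [AddCommGroup L] [Module K L]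
    [AddCommGroup M] [Module K M] {n : ℕ}
    (b : MultilinearMap K (fun _ : Fin (n + 2) => L) L)
    (c : MultilinearMap K (fun _ : Fin (n + 2) => M) M) (f : L →ₗ[K] M) : Prop :=
  ∀ x : Fin (n + 2) → L, f (b x) = c (fun i => f (x i))

/-- `⟨l₁,…,lₙ⟩_σ = [l₁,…,lₙ] - sgn σ • [l_{σ 1},…,l_{σ n}]`. -/
def relBr {K L : Type} [Field K] [AddCommGroup L] [Module K L] {n : ℕ}
    (b : MultilinearMap K (fun _ : Fin (n + 2) => L) L)
    (l : Fin (n + 2) → L) (σ : Equiv.Perm (Fin (n + 2))) : L :=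
  b l - (Equiv.Perm.sign σ : ℤ) • b (fun i => l (σ i))

/-- The componentwise bracket on `L × L`. -/
noncomputable def prodBr {K L : Type} [Field K] [AddCommGroup L] [Module K L] {n : ℕ}
    (b : MultilinearMap K (fun _ : Fin (n + 2) => L) L) :
    MultilinearMap K (fun _ : Fin (n + 2) => L × L) (L × L) :=
  (b.compLinearMap (fun _ => LinearMap.fst K L L)).prod
    (b.compLinearMap (fun _ => LinearMap.snd K L L))

/-- The commutator ideal `[N₁,…,Nₙ]` of a family of submodules. -/
def commutatorIdeal {K L : Type} [Field K] [AddCommGroup L] [Module K L] {n : ℕ}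
    (b : MultilinearMap K (fun _ : Fin (n + 2) => L) L)
    (N : Fin (n + 2) → Submodule K L) : Submodule K L :=
  idealSpan b {y | ∃ (l : Fin (n + 2) → L) (σ : Equiv.Perm (Fin (n + 2))),
    (∀ i, l (σ i) ∈ N i) ∧ y = b l}

lemma bracket_eq_of_sub_mem {K L : Type} [Field K] [AddCommGroup L] [Module K L] {n : ℕ}
    (b : MultilinearMap K (fun _ : Fin (n + 2) => L) L) (N : Submodule K L)
    (hZ : ∀ (x : Fin (n + 2) → L) (i : Fin (n + 2)), x i ∈ N → b x = 0)
    (u v : Fin (n + 2) → L) (h : ∀ j, u j - v j ∈ N) : b u = b v := by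
  suffices H : ∀ s : Finset (Fin (n + 2)),
      b (fun k => if k ∈ s then v k else u k) = b u by
    have := H Finset.univ
    simpa using this.symm
  intro s
  induction s using Finset.induction_on with
  | empty => simp
  | @insert a s ha ih =>
    set w : Fin (n + 2) → L := fun k => if k ∈ s then v k else u k with hw
    have key : (fun k => if k ∈ insert a s then v k else u k)
        = Function.update w a (v a) := by
      funext k
      rcases eq_or_ne k a with rfl | hk
      · simp [hw]
      · simp [hw, Function.update_of_ne hk, hk]
    have h1 : b (Function.update w a (u a - v a)) = 0 :=
      hZ _ a (by simpa using h a)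
    have h2 := b.map_update_sub w a (u a) (v a)
    have h3 : Function.update w a (u a) = w := by
      funext k
      rcases eq_or_ne k a with rfl | hk
      · simp [hw, ha]
      · simp [Function.update_of_ne hk]
    rw [h1, h3] at h2
    rw [key]
    have := (sub_eq_zero.mp h2.symm).symm
    rw [this, ih]

/-- for a surjective homomorphism `f` of Leibniz n-algebras with kernel 𝒦,
the two kernel-pair projections agree on the commutator subalgebra `[R[f],…,R[f]]`
iff the commutator ideal `[𝒦,ℬ,…,ℬ]` is zero. -/
theorem kernelPair_projections_agree_iff_central
    {K L M : Type} [Field K] [AddCommGroup L] [Module K L]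
    [AddCommGroup M] [Module K M] {n : ℕ}
    (b : MultilinearMap K (fun _ : Fin (n + 2) => L) L)
    (c : MultilinearMap K (fun _ : Fin (n + 2) => M) M)
    (hb : IsFund b) (hc : IsFund c)
    (f : L →ₗ[K] M) (hf : IsHom b c f) (hsurj : Function.Surjective f) :
    (∀ p ∈ idealSpanIn (prodBr b) {p : L × L | f p.1 = f p.2}
        {y | ∃ x : Fin (n + 2) → L × L,
          (∀ i, f (x i).1 = f (x i).2) ∧ y = prodBr b x},
        p.1 = p.2) ↔
      idealSpan b {y | ∃ x : Fin (n + 2) → L,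
        (∃ i, x i ∈ LinearMap.ker f) ∧ y = b x} = ⊥ := by
  constructor
  · intro H
    apply le_bot_iff.mp
    apply sInf_le
    constructor
    · rintro y ⟨x, ⟨i, hxi⟩, rfl⟩
      -- build the kernel-pair element
      set p : Fin (n + 2) → L × L := fun j => (x j, Function.update x i 0 j) with hp
      have hmem : prodBr b p ∈ idealSpanIn (prodBr b) {p : L × L | f p.1 = f p.2}
          {y | ∃ x : Fin (n + 2) → L × L,
            (∀ i, f (x i).1 = f (x i).2) ∧ y = prodBr b x} := by
        apply Submodule.mem_sInf.mpr
        intro N hN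
        apply hN.1
        refine ⟨p, fun j => ?_, rfl⟩
        rcases eq_or_ne j i with rfl | hj
        · simp [hp, LinearMap.mem_ker.mp hxi]
        · simp [hp, Function.update_of_ne hj]
      have := H _ hmem
      have h1 : (prodBr b p).1 = b x := by
        simp [prodBr, hp]
      have h2 : (prodBr b p).2 = 0 := by
        have : b (fun j => (p j).2) = 0 := by
          apply b.map_coord_zero (i := i)
          simp [hp]
        simpa [prodBr] using this
      have hbx : b x = 0 := by rw [← h1, this, h2]
      simpa using hbx
    · intro x i hxi
      simp only [Submodule.mem_bot] at hxi ⊢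
      exact b.map_coord_zero i hxi
  · intro H p hp
    have hZ : ∀ (x : Fin (n + 2) → L) (i : Fin (n + 2)),
        x i ∈ LinearMap.ker f → b x = 0 := by
      intro x i hxi
      have : b x ∈ idealSpan b {y | ∃ x : Fin (n + 2) → L,
          (∃ i, x i ∈ LinearMap.ker f) ∧ y = b x} := by
        apply Submodule.mem_sInf.mpr
        intro N hN
        exact hN.1 ⟨x, ⟨i, hxi⟩, rfl⟩
      rw [H] at this
      simpa using this
    set N : Submodule K (L × L) :=
      LinearMap.ker (LinearMap.fst K L L - LinearMap.snd K L L) with hN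
    have hmemN : ∀ q : L × L, q ∈ N ↔ q.1 = q.2 := by
      intro q
      simp [hN, LinearMap.mem_ker, sub_eq_zero]
    have hbr : ∀ x : Fin (n + 2) → L × L, (∀ j, f (x j).1 = f (x j).2) →
        prodBr b x ∈ N := by
      intro x hx
      rw [hmemN]
      have : b (fun j => (x j).1) = b (fun j => (x j).2) :=
        bracket_eq_of_sub_mem b (LinearMap.ker f) hZ _ _
          (fun j => by simp [LinearMap.mem_ker, hx j])
      simpa [prodBr] using this
    have hple : p ∈ N := by
      refine Submodule.mem_sInf.mp hp N ⟨?_, ?_⟩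
      · rintro y ⟨x, hx, rfl⟩
        exact hbr x hx
      · intro x i hxC _
        exact hbr x hxC
    exact (hmemN p).mp hple
end

section
/- Let ℒ be a Leibniz n-algebra over a field 𝒦. The vector space ℒ^{⊗(n-1)} equipped with the binary bracket [l₁⊗…⊗l_{n-1}, l'₁⊗…⊗l'_{n-1}] = Σ_{1≤i≤n-1} l₁⊗…⊗[lᵢ,l'₁,…,l'_{n-1}]⊗…⊗l_{n-1} is a Leibniz algebra, i.e. satisfies the Leibniz identity [[x,y],z] = [[x,z],y] + [x,[y,z]]. -/
open scoped BigOperators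

namespace DaletskiiAux

open PiTensorProduct

variable {K L : Type} [Field K] [AddCommGroup L] [Module K L] {n : ℕ}
  (b : MultilinearMap K (fun _ : Fin (n + 2) => L) L)

/-- The right adjoint action `x ↦ [x, l'₁, …, l'_{n+1}]`. -/
def ad (l' : Fin (n + 1) → L) : L →ₗ[K] L where
  toFun x := b (Fin.cons x l')
  map_add' x y := by
    show b (Fin.cons (x + y) l') = b (Fin.cons x l') + b (Fin.cons y l')
    have key : ∀ z, b (Fin.cons z l') = b (Function.update (Fin.cons x l') 0 z) :=
      fun z => by rw [Fin.update_cons_zero]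
    rw [key (x + y), key x, key y]
    exact b.map_update_add _ 0 x y
  map_smul' c x := by
    show b (Fin.cons (c • x) l') = c • b (Fin.cons x l')
    have key : ∀ z, b (Fin.cons z l') = b (Function.update (Fin.cons x l') 0 z) :=
      fun z => by rw [Fin.update_cons_zero]
    rw [key (c • x), key x]
    exact b.map_update_smul _ 0 c x

@[simp] lemma ad_apply (l' : Fin (n + 1) → L) (x : L) : ad b l' x = b (Fin.cons x l') := rfl

/-- The derivation-like multilinear extension of `f : L →ₗ L` to the tensor power. -/
noncomputable def der (f : L →ₗ[K] L) :
    MultilinearMap K (fun _ : Fin (n + 1) => L) (PiTensorProduct K fun _ : Fin (n + 1) => L) :=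
  ∑ i : Fin (n + 1),
    (PiTensorProduct.tprod K).compLinearMap
      (Function.update (fun _ => (LinearMap.id : L →ₗ[K] L)) i f)

lemma der_apply (f : L →ₗ[K] L) (x : Fin (n + 1) → L) :
    der (n := n) f x = ∑ i : Fin (n + 1), tprod K (Function.update x i (f (x i))) := by
  simp only [der, MultilinearMap.sum_apply, MultilinearMap.compLinearMap_apply]
  refine Finset.sum_congr rfl fun i _ => ?_
  congr 1
  funext j
  rcases eq_or_ne j i with rfl | h
  · simp
  · simp [Function.update_of_ne h]

lemma der_add (f g : L →ₗ[K] L) : der (n := n) (f + g) = der f + der g := by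
  ext x
  simp only [der_apply, LinearMap.add_apply, MultilinearMap.add_apply,
    MultilinearMap.map_update_add, Finset.sum_add_distrib]

lemma der_smul (c : K) (f : L →ₗ[K] L) : der (n := n) (c • f) = c • der f := by
  ext x
  simp only [der_apply, LinearMap.smul_apply, MultilinearMap.smul_apply,
    MultilinearMap.map_update_smul, Finset.smul_sum]

lemma ad_update_add (l' : Fin (n + 1) → L) (j : Fin (n + 1)) (a a' : L) :
    ad b (Function.update l' j (a + a')) =
      ad b (Function.update l' j a) + ad b (Function.update l' j a') := by
  ext x
  simp only [ad_apply, LinearMap.add_apply, Fin.cons_update]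
  exact b.map_update_add _ _ _ _

lemma ad_update_smul (l' : Fin (n + 1) → L) (j : Fin (n + 1)) (c : K) (a : L) :
    ad b (Function.update l' j (c • a)) = c • ad b (Function.update l' j a) := by
  ext x
  simp only [ad_apply, LinearMap.smul_apply, Fin.cons_update]
  exact b.map_update_smul _ _ _ _

/-- The multilinear map `l' ↦ (x ↦ [x, l'])` into endomorphisms of the tensor power. -/
noncomputable def M : MultilinearMap K (fun _ : Fin (n + 1) => L)
    ((PiTensorProduct K fun _ : Fin (n + 1) => L) →ₗ[K]
      (PiTensorProduct K fun _ : Fin (n + 1) => L)) where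
  toFun l' := PiTensorProduct.lift (der (ad b l'))
  map_update_add' {inst} l' j a a' := by
    rw [Subsingleton.elim inst (instDecidableEqFin (n + 1)),
      ad_update_add b l' j a a', der_add, map_add]
  map_update_smul' {inst} l' j c a := by
    rw [Subsingleton.elim inst (instDecidableEqFin (n + 1)),
      ad_update_smul b l' j c a, der_smul, map_smul]

@[simp] lemma M_apply (l' : Fin (n + 1) → L) :
    M b l' = PiTensorProduct.lift (der (ad b l')) := rfl

/-- The Daletskii bracket. -/
noncomputable def D :
    (PiTensorProduct K fun _ : Fin (n + 1) => L) →ₗ[K]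
      (PiTensorProduct K fun _ : Fin (n + 1) => L) →ₗ[K]
        (PiTensorProduct K fun _ : Fin (n + 1) => L) :=
  (PiTensorProduct.lift (M b)).flip

lemma D_tprod (l l' : Fin (n + 1) → L) :
    D b (tprod K l) (tprod K l') =
      ∑ i : Fin (n + 1), tprod K (Function.update l i (b (Fin.cons (l i) l'))) := by
  simp only [D, LinearMap.flip_apply, PiTensorProduct.lift.tprod, M_apply, der_apply, ad_apply]

lemma fund_spec (hfund : IsFund b) (x : L) (m p : Fin (n + 1) → L) :
    b (Fin.cons (b (Fin.cons x m)) p) =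
      b (Fin.cons (b (Fin.cons x p)) m) +
        ∑ k : Fin (n + 1), b (Fin.cons x (Function.update m k (b (Fin.cons (m k) p)))) := by
  have h := hfund (Fin.cons x m) p
  rw [Fin.sum_univ_succ] at h
  simp only [Fin.cons_zero, Fin.cons_succ, Fin.update_cons_zero, ← Fin.cons_update] at h
  exact h

lemma key (hfund : IsFund b) (l m p : Fin (n + 1) → L) :
    D b (D b (tprod K l) (tprod K m)) (tprod K p) =
      D b (D b (tprod K l) (tprod K p)) (tprod K m) +
        D b (tprod K l) (D b (tprod K m) (tprod K p)) := by
  classical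
  set am : Fin (n + 1) → L := fun i => b (Fin.cons (l i) m) with ham
  set ap : Fin (n + 1) → L := fun i => b (Fin.cons (l i) p) with hap
  have hL : D b (D b (tprod K l) (tprod K m)) (tprod K p) =
      ∑ i : Fin (n + 1), ∑ j : Fin (n + 1),
        tprod K (Function.update (Function.update l i (am i)) j
          (b (Fin.cons (Function.update l i (am i) j) p))) := by
    rw [D_tprod, map_sum, LinearMap.sum_apply]
    exact Finset.sum_congr rfl fun i _ => D_tprod b _ p
  have hR1 : D b (D b (tprod K l) (tprod K p)) (tprod K m) =
      ∑ i : Fin (n + 1), ∑ j : Fin (n + 1),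
        tprod K (Function.update (Function.update l i (ap i)) j
          (b (Fin.cons (Function.update l i (ap i) j) m))) := by
    rw [D_tprod, map_sum, LinearMap.sum_apply]
    exact Finset.sum_congr rfl fun i _ => D_tprod b _ m
  have hR2 : D b (tprod K l) (D b (tprod K m) (tprod K p)) =
      ∑ i : Fin (n + 1), ∑ k : Fin (n + 1),
        tprod K (Function.update l i
          (b (Fin.cons (l i) (Function.update m k (b (Fin.cons (m k) p)))))) := by
    rw [D_tprod, map_sum, Finset.sum_comm]
    exact Finset.sum_congr rfl fun k _ => D_tprod b l _
  rw [hL, hR1, hR2]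
  rw [show (∑ i : Fin (n + 1), ∑ j : Fin (n + 1),
        tprod K (Function.update (Function.update l i (ap i)) j
          (b (Fin.cons (Function.update l i (ap i) j) m)))) =
      ∑ j : Fin (n + 1), ∑ i : Fin (n + 1),
        tprod K (Function.update (Function.update l i (ap i)) j
          (b (Fin.cons (Function.update l i (ap i) j) m))) from Finset.sum_comm]
  rw [← Finset.sum_add_distrib]
  refine Finset.sum_congr rfl fun i _ => ?_
  rw [← Finset.add_sum_erase Finset.univ
      (fun j => tprod K (Function.update (Function.update l i (am i)) j
        (b (Fin.cons (Function.update l i (am i) j) p)))) (Finset.mem_univ i),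
    ← Finset.add_sum_erase Finset.univ
      (fun j => tprod K (Function.update (Function.update l j (ap j)) i
        (b (Fin.cons (Function.update l j (ap j) i) m)))) (Finset.mem_univ i)]
  have hdiag : tprod K (Function.update (Function.update l i (am i)) i
        (b (Fin.cons (Function.update l i (am i) i) p))) =
      tprod K (Function.update (Function.update l i (ap i)) i
        (b (Fin.cons (Function.update l i (ap i) i) m))) +
      ∑ k : Fin (n + 1),
        tprod K (Function.update l i
          (b (Fin.cons (l i) (Function.update m k (b (Fin.cons (m k) p)))))) := by
    simp only [Function.update_idem, Function.update_self, ham, hap]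
    rw [fund_spec b hfund, (PiTensorProduct.tprod K).map_update_add, (PiTensorProduct.tprod K).map_update_sum]
  have hoff : ∀ j ∈ Finset.univ.erase i,
      tprod K (Function.update (Function.update l i (am i)) j
          (b (Fin.cons (Function.update l i (am i) j) p))) =
      tprod K (Function.update (Function.update l j (ap j)) i
          (b (Fin.cons (Function.update l j (ap j) i) m))) := by
    intro j hj
    have hji : j ≠ i := Finset.ne_of_mem_erase hj
    rw [Function.update_of_ne hji, Function.update_of_ne hji.symm,
      Function.update_comm hji.symm]
  rw [Finset.sum_congr rfl hoff, hdiag]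
  abel

lemma leibniz (hfund : IsFund b)
    (x y z : PiTensorProduct K fun _ : Fin (n + 1) => L) :
    D b (D b x y) z = D b (D b x z) y + D b x (D b y z) := by
  induction x using PiTensorProduct.induction_on with
  | smul_tprod r f =>
    induction y using PiTensorProduct.induction_on with
    | smul_tprod s g =>
      induction z using PiTensorProduct.induction_on with
      | smul_tprod t h =>
        simp only [map_smul, LinearMap.smul_apply]
        rw [key b hfund]
        module
      | add z₁ z₂ ih₁ ih₂ =>
        simp only [map_add, LinearMap.add_apply] at ih₁ ih₂ ⊢
        rw [ih₁, ih₂]; abel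
    | add y₁ y₂ ih₁ ih₂ =>
      simp only [map_add, LinearMap.add_apply] at ih₁ ih₂ ⊢
      rw [ih₁, ih₂]; abel
  | add x₁ x₂ ih₁ ih₂ =>
    simp only [map_add, LinearMap.add_apply] at ih₁ ih₂ ⊢
    rw [ih₁, ih₂]; abel

end DaletskiiAux

open PiTensorProduct in
/-- Daletskii functor: on `ℒ^{⊗(n-1)}` the bracket
`[l₁⊗…⊗l_{n-1}, l'₁⊗…⊗l'_{n-1}] = Σᵢ l₁⊗…⊗[lᵢ,l'₁,…,l'_{n-1}]⊗…⊗l_{n-1}`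
exists (as a bilinear map) and satisfies the Leibniz identity. -/
theorem daletskii_is_leibniz
    {K L : Type} [Field K] [AddCommGroup L] [Module K L] {n : ℕ}
    (b : MultilinearMap K (fun _ : Fin (n + 2) => L) L) (hfund : IsFund b) :
    ∃ D : (PiTensorProduct K fun _ : Fin (n + 1) => L) →ₗ[K]
        (PiTensorProduct K fun _ : Fin (n + 1) => L) →ₗ[K]
        (PiTensorProduct K fun _ : Fin (n + 1) => L),
      (∀ l l' : Fin (n + 1) → L,
        D (tprod K l) (tprod K l') =
          ∑ i : Fin (n + 1),
            tprod K (Function.update l i (b (Fin.cons (l i) l')))) ∧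
      (∀ x y z, D (D x y) z = D (D x z) y + D x (D y z)) := by
  exact ⟨DaletskiiAux.D b, DaletskiiAux.D_tprod b, DaletskiiAux.leibniz b hfund⟩
end

section
/- Let f : ℬ → 𝒜 be a surjective homomorphism of Leibniz n-algebras with kernel 𝒦, and let f₀, f₁ be the kernel-pair projections. Then f₀ and f₁ agree on the relative commutator ⟨R[f],…,R[f]⟩ if and only if the ideal ⟨𝒦, ℬ, …, ℬ⟩ is zero. -/
open scoped BigOperators

section aux
variable {K L M : Type} [Field K] [AddCommGroup L] [Module K L]
  [AddCommGroup M] [Module K M] {n : ℕ}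

lemma comp_update {α β : Type*} [DecidableEq α] (σ : Equiv.Perm α) (u : α → β) (m : α) (a : β) :
    (fun i => Function.update u m a (σ i)) = Function.update (fun i => u (σ i)) (σ.symm m) a := by
  funext i
  simp only [Function.update]
  by_cases h : σ i = m
  · simp [h, (Equiv.apply_eq_iff_eq_symm_apply σ).mp h]
  · have h2 : ¬ i = σ.symm m := fun hh => h ((Equiv.apply_eq_iff_eq_symm_apply σ).mpr hh)
    simp [h, h2]

lemma map_zsmul_coord (b : MultilinearMap K (fun _ : Fin (n + 2) => L) L)
    (w : Fin (n + 2) → L) (i : Fin (n + 2)) (g : ℤ) (a : L) :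
    b (Function.update w i (g • a)) = g • b (Function.update w i a) := by
  rw [← Int.cast_smul_eq_zsmul K g a, b.map_update_smul, Int.cast_smul_eq_zsmul]

lemma cons_sub_zsmul (b : MultilinearMap K (fun _ : Fin (n + 2) => L) L)
    (t : Fin (n + 1) → L) (a : L) (g : ℤ) (a' : L) :
    b (Fin.cons (a - g • a') t) = b (Fin.cons a t) - g • b (Fin.cons a' t) := by
  have h1 : ∀ z : L, (Fin.cons z t : Fin (n + 2) → L) = Function.update (Fin.cons a t) 0 z := by
    intro z; rw [Fin.update_cons_zero]
  rw [h1 (a - g • a'), b.map_update_sub, map_zsmul_coord, ← h1 a, ← h1 a']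
 

/-- telescoping lemma -/
lemma telescope (B : (Fin (n + 2) → L) → L)
    (hadd : ∀ (w : Fin (n + 2) → L) (j : Fin (n + 2)) (a a' : L),
      B (Function.update w j (a + a')) = B (Function.update w j a) + B (Function.update w j a'))
    (u v : Fin (n + 2) → L)
    (h0 : ∀ (s : Finset (Fin (n + 2))) (j : Fin (n + 2)), j ∉ s →
      B (Function.update (fun t => if t ∈ s then u t else v t) j (u j - v j)) = 0) :
    B u = B v := by
  have key : ∀ s : Finset (Fin (n + 2)), B (fun t => if t ∈ s then u t else v t) = B v := by
    intro s
    induction s using Finset.induction_on with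
    | empty => simp
    | @insert j s hj ih =>
      have hins : (fun t => if t ∈ insert j s then u t else v t) =
          Function.update (fun t => if t ∈ s then u t else v t) j (u j) := by
        funext t
        by_cases ht : t = j
        · subst ht; simp [Function.update_self]
        · simp [Function.update_of_ne ht, Finset.mem_insert, ht]
      have hself : (fun t => if t ∈ s then u t else v t) =
          Function.update (fun t => if t ∈ s then u t else v t) j (v j) := by
        funext t
        by_cases ht : t = j
        · subst ht; simp [Function.update_self, hj]
        · simp [Function.update_of_ne ht]
      rw [hins]
      have : u j = v j + (u j - v j) := by abel
      rw [this, hadd, ← hself, ih, h0 s j hj, add_zero]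
  have := key Finset.univ
  simpa using this

/-- The auxiliary submodule `Z`. -/
def Zmod (b : MultilinearMap K (fun _ : Fin (n + 2) => L) L) (f : L →ₗ[K] M) :
    Submodule K L where
  carrier := {z | ∀ (y : Fin (n + 2) → L) (i j : Fin (n + 2)), i ≠ j → y i = z →
    f (y j) = 0 → b y = 0}
  zero_mem' := fun y i j _ hyi _ => b.map_coord_zero i hyi
  add_mem' := by
    intro z z' hz hz' y i j hij hyi hyj
    have hy : y = Function.update y i (z + z') := by
      rw [← hyi, Function.update_eq_self]
    rw [hy, b.map_update_add]
    rw [hz (Function.update y i z) i j hij (Function.update_self i z y)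
        (by rwa [Function.update_of_ne (Ne.symm hij)]),
      hz' (Function.update y i z') i j hij (Function.update_self i z' y)
        (by rwa [Function.update_of_ne (Ne.symm hij)]), add_zero]
  smul_mem' := by
    intro r z hz y i j hij hyi hyj
    have hy : y = Function.update y i (r • z) := by
      rw [← hyi, Function.update_eq_self]
    rw [hy, b.map_update_smul]
    rw [hz (Function.update y i z) i j hij (Function.update_self i z y)
        (by rwa [Function.update_of_ne (Ne.symm hij)]), smul_zero]

end aux

section core
variable {K L M : Type} [Field K] [AddCommGroup L] [Module K L]
  [AddCommGroup M] [Module K M] {n : ℕ}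
  (b : MultilinearMap K (fun _ : Fin (n + 2) => L) L)
  (c : MultilinearMap K (fun _ : Fin (n + 2) => M) M)
  (f : L →ₗ[K] M)

lemma skew_of_P (hP : ∀ (x : Fin (n + 2) → L) (σ : Equiv.Perm (Fin (n + 2))),
      (∃ i, f (x i) = 0) → relBr b x σ = 0)
    (x : Fin (n + 2) → L) (σ : Equiv.Perm (Fin (n + 2))) (h : ∃ i, f (x i) = 0) :
    b x = (Equiv.Perm.sign σ : ℤ) • b (fun i => x (σ i)) :=
  sub_eq_zero.mp (hP x σ h)

lemma bracket_ker (hf : ∀ x : Fin (n + 2) → L, f (b x) = c (fun i => f (x i)))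
    (x : Fin (n + 2) → L) (j : Fin (n + 2)) (h : f (x j) = 0) : f (b x) = 0 := by
  rw [hf x]
  exact c.map_coord_zero j h

lemma move_to_zero (hP : ∀ (x : Fin (n + 2) → L) (σ : Equiv.Perm (Fin (n + 2))),
      (∃ i, f (x i) = 0) → relBr b x σ = 0)
    (y : Fin (n + 2) → L) (i j : Fin (n + 2)) (hij : i ≠ j) (hyj : f (y j) = 0) :
    ∃ (t : Fin (n + 1) → L) (p : Fin (n + 1)) (g : ℤ), f (t p) = 0 ∧
      b y = g • b (Fin.cons (y i) t) := by
  set τ : Equiv.Perm (Fin (n + 2)) := Equiv.swap 0 i with hτ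
  set w : Fin (n + 2) → L := fun p => y (τ p) with hwdef
  have hw0 : w 0 = y i := by simp [hwdef, hτ, Equiv.swap_apply_left]
  have hq0 : τ j ≠ 0 := by
    intro h
    have : j = τ.symm 0 := (Equiv.apply_eq_iff_eq_symm_apply τ).mp h
    rw [Equiv.symm_swap, Equiv.swap_apply_left] at this
    exact hij this.symm
  refine ⟨Fin.tail w, (τ j).pred hq0, (Equiv.Perm.sign τ : ℤ), ?_, ?_⟩
  · show f (w (((τ j).pred hq0).succ)) = 0
    rw [Fin.succ_pred]
    simpa [hwdef, hτ, Equiv.swap_apply_self] using hyj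
  · have h1 : b y = (Equiv.Perm.sign τ : ℤ) • b w := skew_of_P b f hP y τ ⟨j, hyj⟩
    rw [h1]
    congr 1
    rw [← hw0]
    exact congrArg b (Fin.cons_self_tail w).symm

lemma relBr_mem_Z (hb : ∀ (l : Fin (n + 2) → L) (l' : Fin (n + 1) → L),
      b (Fin.cons (b l) l') =
        ∑ i : Fin (n + 2), b (Function.update l i (b (Fin.cons (l i) l'))))
    (hf : ∀ x : Fin (n + 2) → L, f (b x) = c (fun i => f (x i)))
    (hP : ∀ (x : Fin (n + 2) → L) (σ : Equiv.Perm (Fin (n + 2))),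
      (∃ i, f (x i) = 0) → relBr b x σ = 0)
    (u : Fin (n + 2) → L) (σ : Equiv.Perm (Fin (n + 2))) :
    relBr b u σ ∈ Zmod b f := by
  intro y i j hij hyi hyj
  obtain ⟨t, p, g, htp, hby⟩ := move_to_zero b f hP y i j hij hyj
  rw [hby, hyi]
  set gs : ℤ := (Equiv.Perm.sign σ : ℤ) with hgs
  set e : Fin (n + 2) → L := fun m => b (Fin.cons (u m) t) with he
  have hek : ∀ m, f (e m) = 0 := by
    intro m
    refine bracket_ker b c f hf _ p.succ ?_
    simpa [Fin.cons_succ] using htp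
  set G : Fin (n + 2) → L :=
    fun m => b (Function.update (fun i => u (σ i)) (σ.symm m) (e m)) with hG
  have hterm : ∀ m, b (Function.update u m (e m)) = gs • G m := by
    intro m
    have hk : ∃ q, f (Function.update u m (e m) q) = 0 :=
      ⟨m, by simp [Function.update_self, hek m]⟩
    have := skew_of_P b f hP (Function.update u m (e m)) σ hk
    rw [comp_update] at this
    exact this
  have hsum1 : b (Fin.cons (b u) t) = gs • ∑ m, G m := by
    rw [hb u t, Finset.smul_sum]
    exact Finset.sum_congr rfl fun m _ => hterm m
  have hsum2 : b (Fin.cons (b (fun i => u (σ i))) t) = ∑ m, G m := by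
    rw [hb (fun i => u (σ i)) t, ← Equiv.sum_comp σ G]
    refine Finset.sum_congr rfl fun m _ => ?_
    simp [hG, he]
  have : b (Fin.cons (relBr b u σ) t) = 0 := by
    rw [show relBr b u σ = b u - gs • b (fun i => u (σ i)) from rfl,
      cons_sub_zsmul, hsum1, hsum2, sub_self]
  rw [this, smul_zero]

lemma Z_isIdeal (hb : ∀ (l : Fin (n + 2) → L) (l' : Fin (n + 1) → L),
      b (Fin.cons (b l) l') =
        ∑ i : Fin (n + 2), b (Function.update l i (b (Fin.cons (l i) l'))))
    (hf : ∀ x : Fin (n + 2) → L, f (b x) = c (fun i => f (x i)))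
    (hP : ∀ (x : Fin (n + 2) → L) (σ : Equiv.Perm (Fin (n + 2))),
      (∃ i, f (x i) = 0) → relBr b x σ = 0)
    (x : Fin (n + 2) → L) (m : Fin (n + 2)) (hx : x m ∈ Zmod b f) :
    b x ∈ Zmod b f := by
  intro y i j hij hyi hyj
  obtain ⟨t, p, g, htp, hby⟩ := move_to_zero b f hP y i j hij hyj
  rw [hby, hyi]
  set e : Fin (n + 2) → L := fun q => b (Fin.cons (x q) t) with he
  have hek : ∀ q, f (e q) = 0 := by
    intro q
    refine bracket_ker b c f hf _ p.succ ?_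
    simpa [Fin.cons_succ] using htp
  have hterm : ∀ q, b (Function.update x q (e q)) = 0 := by
    intro q
    by_cases hqm : q = m
    · subst hqm
      have hez : e q = 0 := by
        refine hx (Fin.cons (x q) t) 0 p.succ (Fin.succ_ne_zero p).symm (Fin.cons_zero _ _) ?_
        simpa [Fin.cons_succ] using htp
      rw [hez]
      exact b.map_coord_zero q (Function.update_self q 0 x)
    · refine hx (Function.update x q (e q)) m q (Ne.symm hqm) ?_ ?_
      · exact Function.update_of_ne (Ne.symm hqm) _ _
      · rw [Function.update_self]; exact hek q
  have : b (Fin.cons (b x) t) = 0 := by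
    rw [hb x t]
    exact Finset.sum_eq_zero fun q _ => hterm q
  rw [this, smul_zero]

end core

section more
variable {K L M : Type} [Field K] [AddCommGroup L] [Module K L]
  [AddCommGroup M] [Module K M] {n : ℕ}

lemma relBr_add_coord (b : MultilinearMap K (fun _ : Fin (n + 2) => L) L)
    (w : Fin (n + 2) → L) (j : Fin (n + 2)) (σ : Equiv.Perm (Fin (n + 2))) (a a' : L) :
    relBr b (Function.update w j (a + a')) σ =
      relBr b (Function.update w j a) σ + relBr b (Function.update w j a') σ := by
  unfold relBr
  rw [comp_update, comp_update, comp_update, b.map_update_add, b.map_update_add, smul_add]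
  abel

lemma prodBr_fst (b : MultilinearMap K (fun _ : Fin (n + 2) => L) L)
    (x : Fin (n + 2) → L × L) : (prodBr b x).1 = b (fun i => (x i).1) := rfl

lemma prodBr_snd (b : MultilinearMap K (fun _ : Fin (n + 2) => L) L)
    (x : Fin (n + 2) → L × L) : (prodBr b x).2 = b (fun i => (x i).2) := rfl

lemma relBr_prod_fst (b : MultilinearMap K (fun _ : Fin (n + 2) => L) L)
    (x : Fin (n + 2) → L × L) (σ : Equiv.Perm (Fin (n + 2))) :
    (relBr (prodBr b) x σ).1 = relBr b (fun i => (x i).1) σ := by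
  unfold relBr
  rw [Prod.fst_sub, Prod.smul_fst, prodBr_fst, prodBr_fst]

lemma relBr_prod_snd (b : MultilinearMap K (fun _ : Fin (n + 2) => L) L)
    (x : Fin (n + 2) → L × L) (σ : Equiv.Perm (Fin (n + 2))) :
    (relBr (prodBr b) x σ).2 = relBr b (fun i => (x i).2) σ := by
  unfold relBr
  rw [Prod.snd_sub, Prod.smul_snd, prodBr_snd, prodBr_snd]

end more



/-- for a surjective homomorphism `f` of Leibniz n-algebras with kernel 𝒦,
the kernel-pair projections agree on the relative commutator `⟨R[f],…,R[f]⟩` iff the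
relative commutator ideal `⟨𝒦,ℬ,…,ℬ⟩` is zero. -/
theorem kernelPair_projections_agree_iff_lie_central
    {K L M : Type} [Field K] [AddCommGroup L] [Module K L]
    [AddCommGroup M] [Module K M] {n : ℕ}
    (b : MultilinearMap K (fun _ : Fin (n + 2) => L) L)
    (c : MultilinearMap K (fun _ : Fin (n + 2) => M) M)
    (hb : IsFund b) (hc : IsFund c)
    (f : L →ₗ[K] M) (hf : IsHom b c f) (hsurj : Function.Surjective f) :
    (∀ p ∈ idealSpanIn (prodBr b) {p : L × L | f p.1 = f p.2}
        {y | ∃ (x : Fin (n + 2) → L × L) (σ : Equiv.Perm (Fin (n + 2))),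
          (∀ i, f (x i).1 = f (x i).2) ∧ y = relBr (prodBr b) x σ},
        p.1 = p.2) ↔
      idealSpan b {y | ∃ (x : Fin (n + 2) → L) (σ : Equiv.Perm (Fin (n + 2))),
        (∃ i, x i ∈ LinearMap.ker f) ∧ y = relBr b x σ} = ⊥ := by
  set R : Set (L × L) := {p : L × L | f p.1 = f p.2} with hR
  set SR : Set (L × L) := {y | ∃ (x : Fin (n + 2) → L × L) (σ : Equiv.Perm (Fin (n + 2))),
      (∀ i, f (x i).1 = f (x i).2) ∧ y = relBr (prodBr b) x σ} with hSR
  set SJ : Set L := {y | ∃ (x : Fin (n + 2) → L) (σ : Equiv.Perm (Fin (n + 2))),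
      (∃ i, x i ∈ LinearMap.ker f) ∧ y = relBr b x σ} with hSJ
  constructor
  · intro hL
    have hgen0 : ∀ (x : Fin (n + 2) → L) (σ : Equiv.Perm (Fin (n + 2))),
        (∃ i, x i ∈ LinearMap.ker f) → relBr b x σ = 0 := by
      rintro x σ ⟨i, hi⟩
      have hi0 : f (x i) = 0 := LinearMap.mem_ker.mp hi
      set xh : Fin (n + 2) → L × L := fun j => (x j, Function.update x i 0 j) with hxh
      have hker : ∀ j, f (xh j).1 = f (xh j).2 := by
        intro j
        by_cases hj : j = i
        · subst hj; simp [hxh, Function.update_self, hi0]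
        · simp [hxh, Function.update_of_ne hj]
      have hmem : relBr (prodBr b) xh σ ∈ idealSpanIn (prodBr b) R SR := by
        rw [idealSpanIn, Submodule.mem_sInf]
        intro N hN
        exact hN.1 ⟨xh, σ, hker, rfl⟩
      have heq := hL _ hmem
      have h1 : (relBr (prodBr b) xh σ).1 = relBr b x σ := by
        rw [relBr_prod_fst]
      have h2 : (relBr (prodBr b) xh σ).2 = 0 := by
        rw [relBr_prod_snd]
        have hz1 : b (fun j => (xh j).2) = 0 :=
          b.map_coord_zero i (by simp [hxh])
        have hz2 : b (fun k => (xh (σ k)).2) = 0 := by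
          rw [show (fun k => (xh (σ k)).2) = fun k => Function.update x i 0 (σ k) from rfl,
            comp_update]
          exact b.map_coord_zero (σ.symm i) (Function.update_self _ _ _)
        unfold relBr
        rw [hz1, hz2, smul_zero, sub_zero]
      rw [← h1, heq, h2]
    refine le_antisymm ?_ bot_le
    refine sInf_le ⟨?_, ?_⟩
    · rintro y ⟨x, σ, hx, rfl⟩
      simpa using hgen0 x σ hx
    · intro x i hx
      have : x i = 0 := by simpa using hx
      simpa using b.map_coord_zero i this
  · intro hJ p hp
    have hP : ∀ (x : Fin (n + 2) → L) (σ : Equiv.Perm (Fin (n + 2))),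
        (∃ i, f (x i) = 0) → relBr b x σ = 0 := by
      intro x σ hx
      have hmem : relBr b x σ ∈ idealSpan b SJ := by
        rw [idealSpan, Submodule.mem_sInf]
        intro N hN
        obtain ⟨i, hi⟩ := hx
        exact hN.1 ⟨x, σ, ⟨i, LinearMap.mem_ker.mpr hi⟩, rfl⟩
      rw [hJ] at hmem
      simpa using hmem
    set N : Submodule K (L × L) :=
      LinearMap.ker (LinearMap.fst K L L - LinearMap.snd K L L) ⊓
        (Zmod b f).comap (LinearMap.fst K L L) with hN
    have hNmem : ∀ q : L × L, q ∈ N ↔ q.1 = q.2 ∧ q.1 ∈ Zmod b f := by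
      intro q
      rw [hN, Submodule.mem_inf, LinearMap.mem_ker, Submodule.mem_comap]
      constructor
      · rintro ⟨h1, h2⟩
        exact ⟨sub_eq_zero.mp h1, h2⟩
      · rintro ⟨h1, h2⟩
        exact ⟨by simpa using sub_eq_zero.mpr h1, h2⟩
    have hNfam : SR ⊆ ↑N ∧ ∀ (x : Fin (n + 2) → L × L) (i : Fin (n + 2)),
        (∀ j, x j ∈ R) → x i ∈ N → prodBr b x ∈ N := by
      constructor
      · rintro y ⟨x, σ, hker, rfl⟩
        rw [SetLike.mem_coe, hNmem]
        constructor
        · rw [relBr_prod_fst, relBr_prod_snd]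
          refine telescope (fun l => relBr b l σ)
            (fun w j a a' => relBr_add_coord b w j σ a a') _ _ ?_
          intro s j hj
          refine hP _ σ ⟨j, ?_⟩
          rw [Function.update_self, map_sub, hker j, sub_self]
        · rw [relBr_prod_fst]
          exact relBr_mem_Z b c f hb hf hP _ σ
      · intro x i hxR hxiN
        rw [hNmem] at hxiN ⊢
        obtain ⟨hx12, hxZ⟩ := hxiN
        constructor
        · rw [prodBr_fst, prodBr_snd]
          refine telescope (fun l => b l) (fun w j a a' => b.map_update_add w j a a') _ _ ?_
          intro s j hj
          by_cases hji : j = i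
          · subst hji
            have : (x j).1 - (x j).2 = 0 := sub_eq_zero.mpr hx12
            rw [this]
            exact b.map_coord_zero j (Function.update_self j 0 _)
          · refine hxZ _ i j (Ne.symm hji) ?_ ?_
            · rw [Function.update_of_ne (Ne.symm hji)]
              by_cases his : i ∈ s <;> simp [his, hx12]
            · rw [Function.update_self, map_sub, hxR j, sub_self]
        · rw [prodBr_fst]
          exact Z_isIdeal b c f hb hf hP _ i hxZ
    have hpN : p ∈ N := by
      rw [idealSpanIn, Submodule.mem_sInf] at hp
      exact hp N hNfam
    exact ((hNmem p).mp hpN).1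
end

section
/- Let ℒ be a Leibniz n-algebra and let 𝒰 be the quotient of ℒ^{⊗n} by the subspace spanned by all elements [l₁,…,lₙ]⊗l'₂⊗…⊗l'ₙ − Σ_{1≤i≤n} l₁⊗…⊗[lᵢ,l'₂,…,l'ₙ]⊗…⊗lₙ. Then the n-ary bracket on 𝒰 given by [l₁¹*…*lₙ¹, …, l₁ⁿ*…*lₙⁿ] = [l₁¹,…,lₙ¹]*…*[l₁ⁿ,…,lₙⁿ] is well defined, and 𝒰 equipped with it is a Leibniz n-algebra. -/
open scoped BigOperators

open PiTensorProduct

/-- The subspace of `ℒ^{⊗n}` spanned by the fundamental-identity relations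
`[l₁,…,lₙ]⊗l'₂⊗…⊗l'ₙ − Σᵢ l₁⊗…⊗[lᵢ,l'₂,…,l'ₙ]⊗…⊗lₙ`. -/
def leibnizRelations {K L : Type} [Field K] [AddCommGroup L] [Module K L] {n : ℕ}
    (b : MultilinearMap K (fun _ : Fin (n + 2) => L) L) :
    Submodule K (PiTensorProduct K fun _ : Fin (n + 2) => L) :=
  Submodule.span K {w | ∃ (l : Fin (n + 2) → L) (l' : Fin (n + 1) → L),
    w = PiTensorProduct.tprod K (Fin.cons (b l) l') -
      ∑ i : Fin (n + 2), PiTensorProduct.tprod K (Function.update l i (b (Fin.cons (l i) l')))}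

/-- on `𝒰 = ℒ^{⊗n} / (fundamental-identity relations)` the bracket
`[l₁¹*…*lₙ¹,…,l₁ⁿ*…*lₙⁿ] = [l₁¹,…,lₙ¹]*…*[l₁ⁿ,…,lₙⁿ]` is a well-defined multilinear
operation which makes `𝒰` a Leibniz n-algebra. -/
theorem uce_leibniz_bracket_well_defined
    {K L : Type} [Field K] [AddCommGroup L] [Module K L] {n : ℕ}
    (b : MultilinearMap K (fun _ : Fin (n + 2) => L) L) (hfund : IsFund b) :
    ∃ Ubr : MultilinearMap K
        (fun _ : Fin (n + 2) =>
          (PiTensorProduct K fun _ : Fin (n + 2) => L) ⧸ leibnizRelations b)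
        ((PiTensorProduct K fun _ : Fin (n + 2) => L) ⧸ leibnizRelations b),
      (∀ x : Fin (n + 2) → (Fin (n + 2) → L),
        Ubr (fun j => Submodule.Quotient.mk (tprod K (x j))) =
          Submodule.Quotient.mk (tprod K (fun j => b (x j)))) ∧
      IsFund Ubr := by
  classical
  -- `lift b` kills the relations thanks to the fundamental identity.
  have hker : leibnizRelations b ≤ LinearMap.ker (PiTensorProduct.lift b) := by
    rw [leibnizRelations, Submodule.span_le]
    rintro w ⟨l, l', rfl⟩
    simp only [SetLike.mem_coe, LinearMap.mem_ker, map_sub, map_sum,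
      PiTensorProduct.lift.tprod]
    rw [hfund l l']
    simp
  set bbar : ((PiTensorProduct K fun _ : Fin (n + 2) => L) ⧸ leibnizRelations b) →ₗ[K] L :=
    (leibnizRelations b).liftQ (PiTensorProduct.lift b) hker with hbbar
  have hbbar_mk : ∀ w, bbar (Submodule.Quotient.mk w) = PiTensorProduct.lift b w := by
    intro w; rfl
  set Ubr : MultilinearMap K
      (fun _ : Fin (n + 2) =>
        (PiTensorProduct K fun _ : Fin (n + 2) => L) ⧸ leibnizRelations b)
      ((PiTensorProduct K fun _ : Fin (n + 2) => L) ⧸ leibnizRelations b) :=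
    (((leibnizRelations b).mkQ.compMultilinearMap
      (PiTensorProduct.tprod K)).compLinearMap (fun _ => bbar)) with hU
  have hUapply : ∀ v, Ubr v = Submodule.Quotient.mk (tprod K (fun i => bbar (v i))) := by
    intro v; rfl
  have hmain : ∀ x : Fin (n + 2) → (Fin (n + 2) → L),
      Ubr (fun j => Submodule.Quotient.mk (tprod K (x j))) =
        Submodule.Quotient.mk (tprod K (fun j => b (x j))) := by
    intro x
    rw [hUapply]
    congr 1
    congr 1
    funext i
    rw [hbbar_mk, PiTensorProduct.lift.tprod]
  refine ⟨Ubr, hmain, ?_⟩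
  intro l l'
  set m : Fin (n + 2) → L := fun i => bbar (l i) with hm
  set m' : Fin (n + 1) → L := fun i => bbar (l' i) with hm'
  have hUl : ∀ v : Fin (n + 2) →
      ((PiTensorProduct K fun _ : Fin (n + 2) => L) ⧸ leibnizRelations b),
      bbar (Ubr v) = b (fun i => bbar (v i)) := by
    intro v
    rw [hUapply, hbbar_mk, PiTensorProduct.lift.tprod]
  have hLHS : Ubr (Fin.cons (Ubr l) l') =
      Submodule.Quotient.mk (PiTensorProduct.tprod K (Fin.cons (b m) m')) := by
    rw [hUapply]
    congr 1
    congr 1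
    funext i
    refine Fin.cases ?_ (fun j => ?_) i
    · simp [hUl l, hm]
    · simp [hm']
  have hRHS : ∀ i : Fin (n + 2),
      Ubr (Function.update l i (Ubr (Fin.cons (l i) l'))) =
        Submodule.Quotient.mk
          (PiTensorProduct.tprod K (Function.update m i (b (Fin.cons (m i) m')))) := by
    intro i
    rw [hUapply]
    congr 1
    congr 1
    funext j
    by_cases h : j = i
    · subst h
      simp only [Function.update_self]
      rw [hUl]
      congr 1
      funext k
      refine Fin.cases ?_ (fun j' => ?_) k <;> simp [hm, hm']
    · simp [Function.update_of_ne h, hm]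
  rw [hLHS]
  have : (∑ i : Fin (n + 2), Ubr (Function.update l i (Ubr (Fin.cons (l i) l')))) =
      Submodule.Quotient.mk
        (∑ i : Fin (n + 2), PiTensorProduct.tprod K (Function.update m i (b (Fin.cons (m i) m')))) := by
    rw [Finset.sum_congr rfl (fun i _ => hRHS i)]
    exact (map_sum (leibnizRelations b).mkQ _ _).symm
  rw [this, Submodule.Quotient.eq]
  exact Submodule.subset_span ⟨m, m', rfl⟩
end

section
/- Let ℒ be a Leibniz n-algebra with ℒ = [ℒ,…,ℒ] (perfect with respect to vector spaces), and let 𝒰 be the Leibniz n-algebra constructed as the quotient of ℒ^{⊗n} by the fundamental-identity relations, with bracket [l₁¹*…*lₙ¹,…,l₁ⁿ*…*lₙⁿ] = [l₁¹,…,lₙ¹]*…*[l₁ⁿ,…,lₙⁿ]. Then the map u : 𝒰 → ℒ, l₁*…*lₙ ↦ [l₁,…,lₙ], is a surjective Leibniz n-algebra homomorphism whose kernel K satisfies [K,𝒰,…,𝒰] = 0 (i.e. u is a central extension). -/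
open scoped BigOperators

open PiTensorProduct

/-- if `ℒ = [ℒ,…,ℒ]` then the map `u : 𝒰 → ℒ`, `l₁*…*lₙ ↦ [l₁,…,lₙ]`,
from `𝒰 = ℒ^{⊗n}/(fundamental-identity relations)` (with its componentwise bracket) is a
surjective homomorphism of Leibniz n-algebras whose kernel `K` satisfies `[K,𝒰,…,𝒰] = 0`,
i.e. `u` is a central extension. -/
theorem uce_leibniz_is_central_extension
    {K L : Type} [Field K] [AddCommGroup L] [Module K L] {n : ℕ}
    (b : MultilinearMap K (fun _ : Fin (n + 2) => L) L) (hfund : IsFund b)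
    (hperf : idealSpan b {y | ∃ l : Fin (n + 2) → L, y = b l} = ⊤) :
    ∃ (Ubr : MultilinearMap K
        (fun _ : Fin (n + 2) =>
          (PiTensorProduct K fun _ : Fin (n + 2) => L) ⧸ leibnizRelations b)
        ((PiTensorProduct K fun _ : Fin (n + 2) => L) ⧸ leibnizRelations b))
      (u : ((PiTensorProduct K fun _ : Fin (n + 2) => L) ⧸ leibnizRelations b) →ₗ[K] L),
      (∀ x : Fin (n + 2) → (Fin (n + 2) → L),
        Ubr (fun j => Submodule.Quotient.mk (tprod K (x j))) =
          Submodule.Quotient.mk (tprod K (fun j => b (x j)))) ∧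
      (∀ l : Fin (n + 2) → L, u (Submodule.Quotient.mk (tprod K l)) = b l) ∧
      Function.Surjective u ∧
      IsHom Ubr b u ∧
      idealSpan Ubr {y | ∃ x : Fin (n + 2) →
          ((PiTensorProduct K fun _ : Fin (n + 2) => L) ⧸ leibnizRelations b),
        (∃ i, x i ∈ LinearMap.ker u) ∧ y = Ubr x} = ⊥ := by
  classical
  have hRker : leibnizRelations b ≤ LinearMap.ker (PiTensorProduct.lift b) := by
    rw [leibnizRelations, Submodule.span_le]
    rintro w ⟨l, l', rfl⟩
    simp only [SetLike.mem_coe, LinearMap.mem_ker, map_sub, map_sum,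
      PiTensorProduct.lift.tprod, sub_eq_zero]
    exact hfund l l'
  set u : ((PiTensorProduct K fun _ : Fin (n + 2) => L) ⧸ leibnizRelations b) →ₗ[K] L :=
    (leibnizRelations b).liftQ (PiTensorProduct.lift b) hRker with huq
  have hu : ∀ l : Fin (n + 2) → L, u (Submodule.Quotient.mk (tprod K l)) = b l := by
    intro l
    simp [huq, Submodule.liftQ_apply]
  set Ubr : MultilinearMap K
      (fun _ : Fin (n + 2) =>
        (PiTensorProduct K fun _ : Fin (n + 2) => L) ⧸ leibnizRelations b)
      ((PiTensorProduct K fun _ : Fin (n + 2) => L) ⧸ leibnizRelations b) :=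
    ((leibnizRelations b).mkQ.compMultilinearMap (PiTensorProduct.tprod K)).compLinearMap
      (fun _ => u) with hUbr
  have hUbrApply : ∀ x, Ubr x = Submodule.Quotient.mk (tprod K (fun i => u (x i))) := by
    intro x; rfl
  refine ⟨Ubr, u, ?_, hu, ?_, ?_, ?_⟩
  · intro x
    rw [hUbrApply]
    congr 1
    congr 1
    funext i
    exact hu (x i)
  · rw [← LinearMap.range_eq_top]
    refine top_le_iff.mp ?_
    rw [← hperf]
    refine sInf_le ⟨?_, ?_⟩
    · rintro y ⟨l, rfl⟩
      exact ⟨Submodule.Quotient.mk (tprod K l), hu l⟩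
    · intro x i _
      exact ⟨Submodule.Quotient.mk (tprod K x), hu x⟩
  · intro x
    rw [hUbrApply, hu]
  · have hsub : {y | ∃ x : Fin (n + 2) →
          ((PiTensorProduct K fun _ : Fin (n + 2) => L) ⧸ leibnizRelations b),
        (∃ i, x i ∈ LinearMap.ker u) ∧ y = Ubr x} ⊆
        (⊥ : Submodule K ((PiTensorProduct K fun _ : Fin (n + 2) => L) ⧸
          leibnizRelations b)) := by
      rintro y ⟨x, ⟨i, hi⟩, rfl⟩
      rw [LinearMap.mem_ker] at hi
      rw [hUbrApply]
      have h0 : tprod K (fun i => u (x i)) = 0 :=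
        MultilinearMap.map_coord_zero (PiTensorProduct.tprod K) i hi
      simp [h0]
    have hbot : IsIdeal Ubr ⊥ := by
      intro x i hx
      rw [Submodule.mem_bot] at hx ⊢
      exact Ubr.map_coord_zero i hx
    exact le_antisymm (sInf_le ⟨hsub, hbot⟩) bot_le
end

section
/- Let ℒ be a Lie n-algebra with ℒ = [ℒ,…,ℒ], and let u : 𝒰 → ℒ be the map l₁⊙…⊙lₙ ↦ [l₁,…,lₙ] from the quotient 𝒰 of ℒ^{⊗n} by the fundamental-identity relations and the alternating relations. Then u is surjective, 𝒰 = [𝒰,…,𝒰], and the kernel K[u] satisfies [K[u],𝒰,…,𝒰] = 0; that is, u is a central extension of perfect Lie n-algebras. -/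
open scoped BigOperators

open PiTensorProduct

/-- The subspace of `ℒ^{⊗n}` spanned by the fundamental-identity relations together with
the elementary tensors having two equal adjacent entries. -/
def lieRelations {K L : Type} [Field K] [AddCommGroup L] [Module K L] {n : ℕ}
    (b : MultilinearMap K (fun _ : Fin (n + 2) => L) L) :
    Submodule K (PiTensorProduct K fun _ : Fin (n + 2) => L) :=
  leibnizRelations b ⊔
    Submodule.span K {w | ∃ l : Fin (n + 2) → L,
      (∃ i : Fin (n + 1), l i.castSucc = l i.succ) ∧ w = tprod K l}

/-- if the Lie n-algebra `ℒ` is perfect then `u : 𝒰 → ℒ` is surjective,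
`𝒰` is perfect, and `[K[u],𝒰,…,𝒰] = 0`: `u` is a central extension of perfect
Lie n-algebras. -/
theorem uce_lie_is_central_extension
    {K L : Type} [Field K] [AddCommGroup L] [Module K L] {n : ℕ}
    (hchar : (2 : K) ≠ 0)
    (b : MultilinearMap K (fun _ : Fin (n + 2) => L) L)
    (hfund : IsFund b) (hskew : IsSkew b)
    (hperf : idealSpan b {y | ∃ l : Fin (n + 2) → L, y = b l} = ⊤) :
    ∃ (Ubr : MultilinearMap K
        (fun _ : Fin (n + 2) =>
          (PiTensorProduct K fun _ : Fin (n + 2) => L) ⧸ lieRelations b)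
        ((PiTensorProduct K fun _ : Fin (n + 2) => L) ⧸ lieRelations b))
      (u : ((PiTensorProduct K fun _ : Fin (n + 2) => L) ⧸ lieRelations b) →ₗ[K] L),
      (∀ x : Fin (n + 2) → (Fin (n + 2) → L),
        Ubr (fun j => Submodule.Quotient.mk (tprod K (x j))) =
          Submodule.Quotient.mk (tprod K (fun j => b (x j)))) ∧
      (∀ l : Fin (n + 2) → L, u (Submodule.Quotient.mk (tprod K l)) = b l) ∧
      Function.Surjective u ∧
      idealSpan Ubr {y | ∃ x : Fin (n + 2) →
          ((PiTensorProduct K fun _ : Fin (n + 2) => L) ⧸ lieRelations b),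
        y = Ubr x} = ⊤ ∧
      idealSpan Ubr {y | ∃ x : Fin (n + 2) →
          ((PiTensorProduct K fun _ : Fin (n + 2) => L) ⧸ lieRelations b),
        (∃ i, x i ∈ LinearMap.ker u) ∧ y = Ubr x} = ⊥ := by
  classical
  -- lieRelations is killed by `lift b`
  have hker : lieRelations b ≤ LinearMap.ker (PiTensorProduct.lift b) := by
    rw [lieRelations]
    apply sup_le
    · rw [leibnizRelations, Submodule.span_le]
      rintro w ⟨l, l', rfl⟩
      simp only [SetLike.mem_coe, LinearMap.mem_ker, map_sub, map_sum,
        PiTensorProduct.lift.tprod]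
      rw [hfund l l', sub_self]
    · rw [Submodule.span_le]
      rintro w ⟨l, ⟨i, hi⟩, rfl⟩
      have h1 : b l = 0 := by
        have hne : i.castSucc ≠ i.succ := (Fin.castSucc_lt_succ : i.castSucc < i.succ).ne
        have hs := hskew l (Equiv.swap i.castSucc i.succ)
        rw [Equiv.Perm.sign_swap hne] at hs
        have heq : (fun j => l (Equiv.swap i.castSucc i.succ j)) = l := by
          funext j
          rcases eq_or_ne j i.castSucc with h | h
          · rw [h, Equiv.swap_apply_left, hi]
          rcases eq_or_ne j i.succ with h' | h'
          · rw [h', Equiv.swap_apply_right, hi]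
          · rw [Equiv.swap_apply_of_ne_of_ne h h']
        rw [heq] at hs
        have h2 : (2 : K) • b l = 0 := by
          rw [two_smul]
          have hneg : b l = -b l := by simpa using hs
          nth_rewrite 2 [hneg]
          exact add_neg_cancel _
        exact (smul_eq_zero.mp h2).resolve_left hchar
      simp only [SetLike.mem_coe, LinearMap.mem_ker, PiTensorProduct.lift.tprod, h1]
  set U := (PiTensorProduct K fun _ : Fin (n + 2) => L) ⧸ lieRelations b with hU
  set u : U →ₗ[K] L := Submodule.liftQ (lieRelations b) (PiTensorProduct.lift b) hker
    with hudef
  have hu : ∀ l : Fin (n + 2) → L, u (Submodule.Quotient.mk (tprod K l)) = b l := by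
    intro l
    rw [hudef, Submodule.liftQ_apply, PiTensorProduct.lift.tprod]
  set Ubr : MultilinearMap K (fun _ : Fin (n + 2) => U) U :=
    (((lieRelations b).mkQ).compMultilinearMap (PiTensorProduct.tprod K)).compLinearMap
      (fun _ => u) with hUdef
  have hUbr : ∀ x : Fin (n + 2) → U,
      Ubr x = Submodule.Quotient.mk (tprod K (fun j => u (x j))) := by
    intro x
    rfl
  have hsurj : Function.Surjective u := by
    rw [← LinearMap.range_eq_top, eq_top_iff, ← hperf, idealSpan]
    apply sInf_le
    constructor
    · rintro y ⟨l, rfl⟩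
      exact LinearMap.mem_range.mpr ⟨Submodule.Quotient.mk (tprod K l), hu l⟩
    · intro x i _
      exact LinearMap.mem_range.mpr ⟨Submodule.Quotient.mk (tprod K x), hu x⟩
  -- any submodule of U containing all mk (tprod m) is ⊤
  have hspan : ∀ (N : Submodule K U),
      (∀ m : Fin (n + 2) → L, Submodule.Quotient.mk (tprod K m) ∈ N) → N = ⊤ := by
    intro N hN
    rw [eq_top_iff]
    rintro z -
    obtain ⟨w, rfl⟩ := Submodule.mkQ_surjective (lieRelations b) z
    induction w using PiTensorProduct.induction_on with
    | smul_tprod r f =>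
        rw [map_smul]
        exact N.smul_mem r (hN f)
    | add x y hx hy =>
        rw [map_add]
        exact N.add_mem hx hy
  refine ⟨Ubr, u, ?_, hu, hsurj, ?_, ?_⟩
  · intro x
    rw [hUbr]
    congr 1
    congr 1
    funext j
    exact hu (x j)
  · -- perfectness of U
    apply sInf_eq_top.mpr
    rintro N ⟨hsub, -⟩
    apply hspan
    intro m
    have key : Submodule.Quotient.mk (tprod K m) = Ubr (fun j => (hsurj (m j)).choose) := by
      rw [hUbr]
      congr 1
      congr 1
      funext j
      exact ((hsurj (m j)).choose_spec).symm
    rw [key]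
    exact hsub ⟨_, rfl⟩
  · -- centrality
    apply le_bot_iff.mp
    apply sInf_le
    constructor
    · rintro y ⟨x, ⟨i, hxi⟩, rfl⟩
      simp only [SetLike.mem_coe, Submodule.mem_bot]
      rw [hUbr]
      have h0 : u (x i) = 0 := LinearMap.mem_ker.mp hxi
      have hz : tprod K (fun j => u (x j)) = 0 :=
        MultilinearMap.map_coord_zero (PiTensorProduct.tprod K) i h0
      rw [hz]
      exact Submodule.Quotient.mk_eq_zero _ |>.mpr (Submodule.zero_mem _)
    · intro x i hx
      simp only [Submodule.mem_bot] at hx ⊢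
      rw [hUbr]
      have h0 : u (x i) = 0 := by rw [hx, map_zero]
      have hz : tprod K (fun j => u (x j)) = 0 :=
        MultilinearMap.map_coord_zero (PiTensorProduct.tprod K) i h0
      rw [hz]
      exact Submodule.Quotient.mk_eq_zero _ |>.mpr (Submodule.zero_mem _)
end

section
/- Let ℒ be a Lie n-algebra with ℒ = [ℒ,…,ℒ], u : 𝒰 → ℒ its central extension constructed from ℒ^{⊗n}, and f : ℋ → ℒ any central extension (surjective with [K[f],ℋ,…,ℋ] = 0). Then there is a unique Lie n-algebra homomorphism g : 𝒰 → ℋ with f ∘ g = u; in particular g(l₁⊙…⊙lₙ) = [h₁,…,hₙ] for any choice of hᵢ ∈ ℋ with f(hᵢ) = lᵢ, and uniqueness follows since 𝒰 is perfect and any two liftings differ by a central element on generators. -/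
open scoped BigOperators

open PiTensorProduct

/-- Two multilinear maps agreeing on tuples from a spanning set agree everywhere. -/
theorem multilinear_ext_on' {K A B : Type} [Field K] [AddCommGroup A] [Module K A]
    [AddCommGroup B] [Module K B] {m : ℕ}
    (M N : MultilinearMap K (fun _ : Fin m => A) B) {s : Set A}
    (hs : Submodule.span K s = ⊤)
    (h : ∀ v : Fin m → A, (∀ i, v i ∈ s) → M v = N v) : ∀ v, M v = N v := by
  have key : ∀ k : ℕ, ∀ v : Fin m → A, (∀ i : Fin m, k ≤ (i : ℕ) → v i ∈ s) → M v = N v := by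
    intro k
    induction k with
    | zero => exact fun v hv => h v fun i => hv i (Nat.zero_le _)
    | succ k ih =>
      intro v hv
      by_cases hk : k < m
      · have hz : ∀ z ∈ Submodule.span K s,
            M (Function.update v ⟨k, hk⟩ z) = N (Function.update v ⟨k, hk⟩ z) := by
          intro z hzmem
          induction hzmem using Submodule.span_induction with
          | mem x hx =>
            apply ih
            intro i hi
            rcases eq_or_ne i ⟨k, hk⟩ with rfl | hne
            · simpa using hx
            · rw [Function.update_of_ne hne]
              refine hv i ?_
              have : (i : ℕ) ≠ k := fun hc => hne (Fin.ext hc)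
              omega
          | zero => simp
          | add x y hx hy ihx ihy => simp [MultilinearMap.map_update_add, ihx, ihy]
          | smul a x hx ihx => simp [MultilinearMap.map_update_smul, ihx]
        have := hz (v ⟨k, hk⟩) (by rw [hs]; exact Submodule.mem_top)
        simpa [Function.update_eq_self] using this
      · exact ih v fun i _ => absurd i.isLt (by omega)
  exact fun v => key m v fun i hi => absurd i.isLt (by omega)

/-- universality of the central extension `u : 𝒰 → ℒ` of a perfect Lie
n-algebra: for any central extension `f : ℋ → ℒ` there is a unique homomorphism
`g : 𝒰 → ℋ` with `f ∘ g = u`; on generators it is given by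
`g(l₁⊙…⊙lₙ) = [h₁,…,hₙ]` for any lifts `hᵢ` of `lᵢ`. -/
theorem uce_lie_universal
    {K L H : Type} [Field K] [AddCommGroup L] [Module K L]
    [AddCommGroup H] [Module K H] {n : ℕ}
    (hchar : (2 : K) ≠ 0)
    (b : MultilinearMap K (fun _ : Fin (n + 2) => L) L)
    (hfund : IsFund b) (hskew : IsSkew b)
    (hperf : idealSpan b {y | ∃ l : Fin (n + 2) → L, y = b l} = ⊤)
    (Ubr : MultilinearMap K
      (fun _ : Fin (n + 2) =>
        (PiTensorProduct K fun _ : Fin (n + 2) => L) ⧸ lieRelations b)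
      ((PiTensorProduct K fun _ : Fin (n + 2) => L) ⧸ lieRelations b))
    (u : ((PiTensorProduct K fun _ : Fin (n + 2) => L) ⧸ lieRelations b) →ₗ[K] L)
    (hUbr : ∀ x : Fin (n + 2) → (Fin (n + 2) → L),
      Ubr (fun j => Submodule.Quotient.mk (tprod K (x j))) =
        Submodule.Quotient.mk (tprod K (fun j => b (x j))))
    (hu : ∀ l : Fin (n + 2) → L, u (Submodule.Quotient.mk (tprod K l)) = b l)
    (c : MultilinearMap K (fun _ : Fin (n + 2) => H) H)
    (hcfund : IsFund c) (hcskew : IsSkew c)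
    (f : H →ₗ[K] L) (hf : IsHom c b f) (hfsurj : Function.Surjective f)
    (hfcentral : idealSpan c {y | ∃ x : Fin (n + 2) → H,
      (∃ i, x i ∈ LinearMap.ker f) ∧ y = c x} = ⊥) :
    (∃! g : ((PiTensorProduct K fun _ : Fin (n + 2) => L) ⧸ lieRelations b) →ₗ[K] H,
      IsHom Ubr c g ∧ f.comp g = u) ∧
    (∀ g : ((PiTensorProduct K fun _ : Fin (n + 2) => L) ⧸ lieRelations b) →ₗ[K] H,
      IsHom Ubr c g → f.comp g = u →
        ∀ (l : Fin (n + 2) → L) (h : Fin (n + 2) → H), (∀ i, f (h i) = l i) →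
          g (Submodule.Quotient.mk (tprod K l)) = c h) := by
  classical
  -- a linear section of f
  obtain ⟨s, hsec⟩ := f.exists_rightInverse_of_surjective (LinearMap.range_eq_top.mpr hfsurj)
  have hfs : ∀ l, f (s l) = l := fun l => LinearMap.congr_fun hsec l
  -- brackets with an entry in ker f vanish
  have ckill : ∀ x : Fin (n + 2) → H, (∃ i, f (x i) = 0) → c x = 0 := by
    intro x hx
    have hmem : c x ∈ idealSpan c {y | ∃ x : Fin (n + 2) → H,
        (∃ i, x i ∈ LinearMap.ker f) ∧ y = c x} := by
      rw [idealSpan, Submodule.mem_sInf]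
      intro N hN
      exact hN.1 ⟨x, ⟨hx.choose, LinearMap.mem_ker.mpr hx.choose_spec⟩, rfl⟩
    rw [hfcentral] at hmem
    exact hmem
  -- brackets only depend on the entries mod ker f
  have ccongr : ∀ p q : Fin (n + 2) → H, (∀ i, f (p i) = f (q i)) → c p = c q := by
    intro p q hpq
    have key : ∀ k : ℕ, k ≤ n + 2 →
        c (fun i => if (i : ℕ) < k then q i else p i) = c p := by
      intro k
      induction k with
      | zero => intro _; simp
      | succ k ih =>
        intro hk
        have hk' : k < n + 2 := by omega
        have hupd : (fun i : Fin (n + 2) => if (i : ℕ) < k + 1 then q i else p i)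
            = Function.update (fun i : Fin (n + 2) => if (i : ℕ) < k then q i else p i)
                ⟨k, hk'⟩ (q ⟨k, hk'⟩) := by
          funext i
          rcases eq_or_ne i ⟨k, hk'⟩ with rfl | hne
          · simp
          · rw [Function.update_of_ne hne]
            have hik : (i : ℕ) ≠ k := fun hc => hne (Fin.ext hc)
            have hiff : (i : ℕ) < k + 1 ↔ (i : ℕ) < k := by omega
            simp [hiff]
        have hq : q ⟨k, hk'⟩ = p ⟨k, hk'⟩ + (q ⟨k, hk'⟩ - p ⟨k, hk'⟩) := by abel
        rw [hupd, hq, MultilinearMap.map_update_add]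
        have h0 : c (Function.update (fun i : Fin (n + 2) => if (i : ℕ) < k then q i else p i)
            ⟨k, hk'⟩ (q ⟨k, hk'⟩ - p ⟨k, hk'⟩)) = 0 := by
          apply ckill
          exact ⟨⟨k, hk'⟩, by simp [hpq ⟨k, hk'⟩]⟩
        rw [h0, add_zero,
          show p ⟨k, hk'⟩ = (fun i : Fin (n + 2) => if (i : ℕ) < k then q i else p i) ⟨k, hk'⟩
            from by simp, Function.update_eq_self]
        exact ih (by omega)
    have hla : (fun i : Fin (n + 2) => if (i : ℕ) < n + 2 then q i else p i) = q := by
      funext i; simp [i.isLt]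
    calc c p = c (fun i => if (i : ℕ) < n + 2 then q i else p i) := (key (n + 2) le_rfl).symm
      _ = c q := by rw [hla]
  -- brackets with adjacent equal entries vanish
  have cskew0 : ∀ x : Fin (n + 2) → H, (∃ i : Fin (n + 1), x i.castSucc = x i.succ) → c x = 0 := by
    rintro x ⟨i, he⟩
    have hne : i.castSucc ≠ i.succ := (Fin.castSucc_lt_succ : i.castSucc < i.succ).ne
    have hx : (fun j => x (Equiv.swap i.castSucc i.succ j)) = x := by
      funext j
      rcases eq_or_ne j i.castSucc with rfl | h1
      · rw [Equiv.swap_apply_left, ← he]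
      rcases eq_or_ne j i.succ with rfl | h2
      · rw [Equiv.swap_apply_right, he]
      · rw [Equiv.swap_apply_of_ne_of_ne h1 h2]
    have hsw := hcskew x (Equiv.swap i.castSucc i.succ)
    rw [hx, Equiv.Perm.sign_swap hne] at hsw
    have hneg : c x = -c x := by simpa using hsw
    have h2 : (2 : K) • c x = 0 := by
      rw [two_smul]
      nth_rewrite 1 [hneg]
      exact neg_add_cancel _
    exact (smul_eq_zero.mp h2).resolve_left hchar
  -- the lift of the composed multilinear map
  set ψ : (PiTensorProduct K fun _ : Fin (n + 2) => L) →ₗ[K] H :=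
    PiTensorProduct.lift (c.compLinearMap fun _ => s) with hψdef
  have hψ : ∀ l : Fin (n + 2) → L, ψ (tprod K l) = c fun i => s (l i) := by
    intro l
    rw [hψdef, PiTensorProduct.lift.tprod]
    rfl
  -- ψ kills the relations
  have hker : lieRelations b ≤ LinearMap.ker ψ := by
    rw [lieRelations]
    apply sup_le
    · rw [leibnizRelations, Submodule.span_le]
      rintro w ⟨l, l', rfl⟩
      set p : Fin (n + 2) → H := fun j => s (l j) with hp
      set p' : Fin (n + 1) → H := fun j => s (l' j) with hp'
      refine LinearMap.mem_ker.mpr ?_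
      have e1 : ψ (tprod K (Fin.cons (b l) l')) = c (Fin.cons (s (b l)) p') := by
        rw [hψ]
        have : (fun i => s ((Fin.cons (b l) l' : Fin (n + 2) → L) i)) = Fin.cons (s (b l)) p' := by
          funext j; refine Fin.cases ?_ (fun j => ?_) j <;> simp [hp']
        rw [this]
      have e2 : ∀ i : Fin (n + 2), ψ (tprod K (Function.update l i (b (Fin.cons (l i) l')))) =
          c (Function.update p i (s (b (Fin.cons (l i) l')))) := by
        intro i
        rw [hψ]
        have : (fun j => s (Function.update l i (b (Fin.cons (l i) l')) j)) =
            Function.update p i (s (b (Fin.cons (l i) l'))) := by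
          funext j
          rcases eq_or_ne j i with rfl | hne
          · simp
          · simp [Function.update_of_ne hne, hp]
        rw [this]
      have e3 : c (Fin.cons (s (b l)) p') = c (Fin.cons (c p) p') := by
        apply ccongr
        intro i
        refine Fin.cases ?_ (fun i => rfl) i
        rw [Fin.cons_zero, Fin.cons_zero, hfs, hf]
        simp [hp, hfs]
      have e4 : ∀ i : Fin (n + 2), c (Function.update p i (s (b (Fin.cons (l i) l')))) =
          c (Function.update p i (c (Fin.cons (p i) p'))) := by
        intro i
        apply ccongr
        intro j
        rcases eq_or_ne j i with rfl | hne
        · rw [Function.update_self, Function.update_self, hfs, hf]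
          have : (fun j2 => f ((Fin.cons (p j) p' : Fin (n + 2) → H) j2)) = Fin.cons (l j) l' := by
            funext j2; refine Fin.cases ?_ (fun j2 => ?_) j2 <;> simp [hp, hp', hfs]
          rw [this]
        · rw [Function.update_of_ne hne, Function.update_of_ne hne]
      calc ψ (PiTensorProduct.tprod K (Fin.cons (b l) l') -
              ∑ i, PiTensorProduct.tprod K (Function.update l i (b (Fin.cons (l i) l'))))
          = c (Fin.cons (s (b l)) p') -
              ∑ i, c (Function.update p i (s (b (Fin.cons (l i) l')))) := by
            rw [map_sub, map_sum, e1]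
            exact congrArg _ (Finset.sum_congr rfl fun i _ => e2 i)
        _ = c (Fin.cons (c p) p') -
              ∑ i, c (Function.update p i (c (Fin.cons (p i) p'))) := by
            rw [e3]
            exact congrArg _ (Finset.sum_congr rfl fun i _ => e4 i)
        _ = 0 := by rw [hcfund p p', sub_self]
    · rw [Submodule.span_le]
      rintro w ⟨l, hl, rfl⟩
      refine LinearMap.mem_ker.mpr ?_
      rw [hψ]
      apply cskew0
      obtain ⟨i, he⟩ := hl
      exact ⟨i, by simp [he]⟩
  -- the induced map on the quotient
  set g0 := (lieRelations b).liftQ ψ hker with hg0def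
  have hg0 : ∀ l : Fin (n + 2) → L,
      g0 (Submodule.Quotient.mk (tprod K l)) = c fun i => s (l i) := by
    intro l
    rw [hg0def, Submodule.liftQ_apply]
    exact hψ l
  -- the quotient is spanned by classes of elementary tensors
  have spanU : Submodule.span K
      {z : (PiTensorProduct K fun _ : Fin (n + 2) => L) ⧸ lieRelations b |
        ∃ l : Fin (n + 2) → L, z = Submodule.Quotient.mk (tprod K l)} = ⊤ := by
    rw [eq_top_iff]
    rintro z -
    obtain ⟨t, rfl⟩ := Submodule.mkQ_surjective _ z
    have ht : t ∈ Submodule.span K (Set.range (tprod K (s := fun _ : Fin (n + 2) => L))) := by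
      rw [PiTensorProduct.span_tprod_eq_top]; exact Submodule.mem_top
    induction ht using Submodule.span_induction with
    | mem x hx =>
      obtain ⟨l, rfl⟩ := hx
      exact Submodule.subset_span ⟨l, rfl⟩
    | zero => simp
    | add x y _ _ ihx ihy => rw [map_add]; exact Submodule.add_mem _ ihx ihy
    | smul a x _ ihx => rw [map_smul]; exact Submodule.smul_mem _ a ihx
  -- L is spanned by brackets
  have spanL : Submodule.span K {y | ∃ l : Fin (n + 2) → L, y = b l} = ⊤ := by
    rw [eq_top_iff, ← hperf]
    apply sInf_le
    exact ⟨Submodule.subset_span, fun x i _ => Submodule.subset_span ⟨x, rfl⟩⟩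
  -- g0 is a homomorphism
  have hhom : IsHom Ubr c g0 := by
    intro x
    have hmain := multilinear_ext_on' (g0.compMultilinearMap Ubr)
      (c.compLinearMap fun _ => g0) spanU ?_ x
    · simpa using hmain
    · intro v hv
      choose xs hxs using hv
      have hv' : v = fun j => Submodule.Quotient.mk (tprod K (xs j)) := funext hxs
      simp only [LinearMap.compMultilinearMap_apply, MultilinearMap.compLinearMap_apply]
      rw [hv', hUbr, hg0]
      have hj : (fun j => g0 (Submodule.Quotient.mk (tprod K (xs j)))) =
          fun j => c fun i => s (xs j i) := funext fun j => hg0 (xs j)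
      rw [hj]
      apply ccongr
      intro i
      rw [hfs, hf]
      simp [hfs]
  -- f ∘ g0 = u
  have hcomp : f.comp g0 = u := by
    apply Submodule.linearMap_qext
    apply PiTensorProduct.ext
    apply MultilinearMap.ext
    intro l
    simp only [LinearMap.compMultilinearMap_apply, LinearMap.comp_apply, Submodule.mkQ_apply]
    rw [hg0, hf, hu]
    simp [hfs]
  -- uniqueness
  have huniq : ∀ g : ((PiTensorProduct K fun _ : Fin (n + 2) => L) ⧸ lieRelations b) →ₗ[K] H,
      IsHom Ubr c g ∧ f.comp g = u → g = g0 := by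
    rintro g ⟨hg, hgu⟩
    have hgen := multilinear_ext_on'
      ((g.comp (lieRelations b).mkQ).compMultilinearMap (tprod K))
      ((g0.comp (lieRelations b).mkQ).compMultilinearMap (tprod K)) spanL ?_
    · apply Submodule.linearMap_qext
      apply PiTensorProduct.ext
      apply MultilinearMap.ext
      intro l
      simpa using hgen l
    · intro v hv
      choose xs hxs using hv
      have hv' : v = fun i => b (xs i) := funext hxs
      simp only [LinearMap.compMultilinearMap_apply, LinearMap.comp_apply, Submodule.mkQ_apply]
      rw [hv', ← hUbr, hg, hhom]
      apply ccongr
      intro i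
      have h1 : f (g (Submodule.Quotient.mk (tprod K (xs i)))) =
          u (Submodule.Quotient.mk (tprod K (xs i))) := by rw [← hgu]; rfl
      have h2 : f (g0 (Submodule.Quotient.mk (tprod K (xs i)))) =
          u (Submodule.Quotient.mk (tprod K (xs i))) := by rw [← hcomp]; rfl
      rw [h1, h2]
  refine ⟨⟨g0, ⟨hhom, hcomp⟩, fun g hg => huniq g hg⟩, ?_⟩
  intro g hg hgu l h hh
  rw [huniq g ⟨hg, hgu⟩, hg0]
  apply ccongr
  intro i
  rw [hfs, hh]
end
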